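/- arXiv:2402.07042 — 14 statements merged into one kernel-verified Lean document; each statement's English description precedes it below -/
import Mathlib

section
/- In a P-algebra, if z ≤ x and z ≤ y, then z ≤ x·y. -/
structure PAlgebra (X : Type*) where
  zero : X
  compl : X → X
  mul : X → X → X
  le_refl : ∀ x, mul x x = x
  le_antisymm : ∀ x y, mul x y = x → mul y x = y → x = y
  le_trans : ∀ x y z, mul x y = x → mul y z = y → mul x z = x
  smile_symm : ∀ x y, mul (mul x y) x = mul x y → mul (mul y x) y = mul y x
  assoc_zero : ∀ x y z, mul (mul x y) z = zero ↔ mul (mul z y) x = zero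
  assoc_left : ∀ x y z, mul x y = x → mul (mul x y) z = mul x (mul y z)
  assoc_right : ∀ x y z, mul x y = x → mul (mul z y) x = mul z (mul y x)
  mul_mono : ∀ x y z, mul x y = x → mul (mul x z) (mul y z) = mul x z
  mul_le_right : ∀ x y, mul (mul x y) y = mul x y
  zero_mul : ∀ x, mul zero x = zero
  mul_compl : ∀ x, mul x (compl x) = zero
  superpos : ∀ x y z, mul (mul x y) z = mul x y →
    mul (mul x (compl y)) z = mul x (compl y) → mul x z = x

namespace PAlgebra

variable {X : Type*}

/-- x ≤ y iff x·y = x. -/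
def le (P : PAlgebra X) (x y : X) : Prop := P.mul x y = x

/-- x ⌣ y iff x·y ≤ x. -/
def smile (P : PAlgebra X) (x y : X) : Prop := P.le (P.mul x y) x

/-- 1 := 0'. -/
def one (P : PAlgebra X) : X := P.compl P.zero

/-- x + y := (y'·x')'. -/
def plus (P : PAlgebra X) (x y : X) : X := P.compl (P.mul (P.compl y) (P.compl x))

end PAlgebra
theorem stmt0 {X : Type*} (P : PAlgebra X) (x y z : X)
    (h1 : P.le z x) (h2 : P.le z y) : P.le z (P.mul x y) := by
  have := P.mul_mono z x y h1
  rwa [h2] at this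
end

section
/- In a P-algebra, x ⌣ y if and only if x·y is the greatest lower bound of x and y with respect to ≤. -/
namespace PAlgebra

variable {X : Type*} (P : PAlgebra X)

lemma mul_zero' (u : X) : P.mul u P.zero = P.zero :=
  P.le_antisymm _ _ (P.mul_le_right u P.zero) (P.zero_mul _)

/-- u ≤ v → u·v' = 0 -/
lemma le_mul_compl {u v : X} (h : P.mul u v = u) : P.mul u (P.compl v) = P.zero := by
  have h1 := P.assoc_left u v (P.compl v) h
  rw [h] at h1
  rw [h1, P.mul_compl, mul_zero']

/-- u·v = 0 → v·u = 0 -/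
lemma mul_eq_zero_symm {u v : X} (h : P.mul u v = P.zero) : P.mul v u = P.zero := by
  have : P.mul (P.mul v v) u = P.zero := by
    rw [P.assoc_zero, P.mul_le_right, h]
  rwa [P.le_refl] at this

/-- The glb direction: w ≤ x, w ≤ y → w ≤ x·y (no smile needed). -/
lemma le_mul_of_le {w : X} (hx : P.mul w x = w) (hy : P.mul w y = w) :
    P.mul w (P.mul x y) = w := by
  set c := P.compl (P.mul x y) with hc
  -- (c·y)·x = 0
  have h1 : P.mul (P.mul c y) x = P.zero := (P.assoc_zero x y c).mp (P.mul_compl _)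
  set e := P.mul c y with he
  -- e ≤ x'
  have hex : P.mul e (P.compl x) = e := by
    apply P.superpos e x (P.compl x)
    · rw [h1, P.zero_mul]
    · exact P.mul_le_right _ _
  -- x'·w = 0
  have hxw : P.mul (P.compl x) w = P.zero :=
    P.mul_eq_zero_symm (P.le_mul_compl hx)
  -- e·w = 0
  have hew : P.mul e w = P.zero := by
    have := P.assoc_left e (P.compl x) w hex
    rw [hex, hxw, mul_zero'] at this
    exact this
  -- w·c = 0
  have hwc : P.mul w c = P.zero := by
    have : P.mul (P.mul w y) c = P.zero := (P.assoc_zero c y w).mp hew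
    rwa [hy] at this
  -- superpos
  apply P.superpos w (P.mul x y) (P.mul x y)
  · exact P.mul_le_right _ _
  · rw [← hc, hwc, P.zero_mul]

end PAlgebra

theorem stmt1 {X : Type*} (P : PAlgebra X) (x y : X) :
    P.smile x y ↔
      (P.le (P.mul x y) x ∧ P.le (P.mul x y) y ∧
        ∀ w, P.le w x → P.le w y → P.le w (P.mul x y)) := by
  constructor
  · intro h
    exact ⟨h, P.mul_le_right x y, fun w hwx hwy => P.le_mul_of_le hwx hwy⟩
  · exact fun h => h.1
end

section
/- In a P-algebra, x ⌣ y if and only if x·y = y·x. -/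
theorem stmt2 {X : Type*} (P : PAlgebra X) (x y : X) :
    P.smile x y ↔ P.mul x y = P.mul y x := by
  constructor
  · intro h
    -- h : (x·y)·x = x·y
    have hax : P.mul (P.mul x y) x = P.mul x y := h
    have hay : P.mul (P.mul x y) y = P.mul x y := P.mul_le_right x y
    have hbx : P.mul (P.mul y x) x = P.mul y x := P.mul_le_right y x
    have hby : P.mul (P.mul y x) y = P.mul y x := P.smile_symm x y h
    have hab : P.mul (P.mul x y) (P.mul y x) = P.mul x y := by
      have := P.assoc_left (P.mul x y) y x hay
      rw [hay] at this
      rw [← this, hax]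
    have hba : P.mul (P.mul y x) (P.mul x y) = P.mul y x := by
      have := P.assoc_left (P.mul y x) x y hbx
      rw [hbx] at this
      rw [← this, hby]
    exact P.le_antisymm _ _ hab hba
  · intro h
    show P.mul (P.mul x y) x = P.mul x y
    rw [h, P.mul_le_right]
end

section
/- In a P-algebra, the orthogonality relation is symmetric: if x·y = 0 then y·x = 0. -/
theorem stmt4 {X : Type*} (P : PAlgebra X) (x y : X) (h : P.mul x y = P.zero) :
    P.mul y x = P.zero := by
  have h1 : P.mul (P.mul x y) y = P.zero := by rw [h, P.zero_mul]
  have h2 := (P.assoc_zero x y y).mp h1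
  rwa [P.le_refl] at h2
end

section
/- In a P-algebra, x·y = 0 if and only if x ≤ y'. -/
theorem stmt5 {X : Type*} (P : PAlgebra X) (x y : X) :
    P.mul x y = P.zero ↔ P.le x (P.compl y) := by
  constructor
  · intro h
    exact P.superpos x y (P.compl y) (by rw [h, P.zero_mul]) (P.mul_le_right x (P.compl y))
  · intro h
    have h1 : P.mul (P.mul y (P.compl y)) x = P.zero := by rw [P.mul_compl, P.zero_mul]
    have h2 := (P.assoc_zero x (P.compl y) y).mpr h1
    rwa [h] at h2
end

section
/- In a P-algebra, double complementation is the identity: x'' = x. -/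
theorem stmt7 {X : Type*} (P : PAlgebra X) (x : X) :
    P.compl (P.compl x) = x := by
  -- x'' · x' = 0
  have h1 : P.mul (P.compl (P.compl x)) (P.compl x) = P.zero := by
    have := (P.assoc_zero (P.compl (P.compl x)) (P.compl (P.compl x)) (P.compl x)).mpr
    rw [P.le_refl] at this
    apply this
    rw [P.mul_compl, P.zero_mul]
  -- x'' ≤ x
  have h2 : P.mul (P.compl (P.compl x)) x = P.compl (P.compl x) := by
    apply P.superpos (P.compl (P.compl x)) x x
    · exact P.mul_le_right _ _
    · rw [h1, P.zero_mul]
  -- x ≤ x''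
  have h3 : P.mul x (P.compl (P.compl x)) = x := by
    apply P.superpos x (P.compl x) (P.compl (P.compl x))
    · rw [P.mul_compl, P.zero_mul]
    · exact P.mul_le_right _ _
  exact P.le_antisymm _ _ h2 h3
end

section
/- In a P-algebra, if x ⌣ y then x' ⌣ y. -/
theorem stmt10 {X : Type*} (P : PAlgebra X) (x y : X) (h : P.smile x y) :
    P.smile (P.compl x) y := by
  have mul_zero : ∀ a : X, P.mul a P.zero = P.zero := by
    intro a
    exact P.le_antisymm _ _ (P.mul_le_right a P.zero) (P.zero_mul (P.mul a P.zero))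
  -- (x·y)·x' = 0
  have h1 : P.mul (P.mul x y) (P.compl x) = P.zero := by
    have := P.mul_mono (P.mul x y) x (P.compl x) h
    rw [P.mul_compl, mul_zero] at this
    exact this.symm
  -- (x'·y)·x = 0
  have h2 : P.mul (P.mul (P.compl x) y) x = P.zero := by
    rw [P.assoc_zero]
    exact h1
  -- t·x ≤ x'
  have h3 : P.mul (P.mul (P.mul (P.compl x) y) x) (P.compl x)
      = P.mul (P.mul (P.compl x) y) x := by
    rw [h2, P.zero_mul]
  exact P.superpos (P.mul (P.compl x) y) x (P.compl x) h3
    (P.mul_le_right (P.mul (P.compl x) y) (P.compl x))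
end

section
/- In a P-algebra, if the operation · is commutative, then x·y is the greatest lower bound of x and y for every x and y, so ≤ makes X a lattice (and · is associative). -/
theorem stmt11 {X : Type*} (P : PAlgebra X)
    (hcomm : ∀ x y, P.mul x y = P.mul y x) :
    (∀ x y : X, P.le (P.mul x y) x ∧ P.le (P.mul x y) y ∧
        ∀ w, P.le w x → P.le w y → P.le w (P.mul x y)) ∧
    (∀ x y : X, ∃ u, P.le x u ∧ P.le y u ∧ ∀ w, P.le x w → P.le y w → P.le u w) ∧
    (∀ x y z : X, P.mul (P.mul x y) z = P.mul x (P.mul y z)) := by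
  have hz : ∀ x, P.mul x P.zero = P.zero := fun x => by rw [hcomm]; exact P.zero_mul x
  -- glb
  have glb : ∀ x y : X, P.le (P.mul x y) x ∧ P.le (P.mul x y) y ∧
      ∀ w, P.le w x → P.le w y → P.le w (P.mul x y) := by
    intro x y
    refine ⟨?_, P.mul_le_right x y, ?_⟩
    · show P.mul (P.mul x y) x = P.mul x y
      rw [hcomm x y]; exact P.mul_le_right y x
    · intro w hwx hwy
      have h := P.assoc_left w x y hwx
      unfold PAlgebra.le at *
      rw [hwx, hwy] at h
      exact h.symm
  have leT : ∀ {a b c : X}, P.le a b → P.le b c → P.le a c :=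
    fun h1 h2 => P.le_trans _ _ _ h1 h2
  -- contraposition: x ≤ w → w' ≤ x'
  have hcontra : ∀ x w : X, P.le x w → P.le (P.compl w) (P.compl x) := by
    intro x w hxw
    have hxw' : P.mul x (P.compl w) = P.zero := by
      have h := P.assoc_left x w (P.compl w) hxw
      rw [hxw, P.mul_compl, hz] at h
      exact h
    have h1 : P.mul (P.mul (P.compl w) x) (P.compl x) = P.mul (P.compl w) x := by
      rw [hcomm (P.compl w) x, hxw', P.zero_mul]
    exact P.superpos (P.compl w) x (P.compl x) h1 (P.mul_le_right _ _)
  -- x · (x' · y') = 0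
  have hmz : ∀ x y : X, P.mul x (P.mul (P.compl x) (P.compl y)) = P.zero := by
    intro x y
    have h0 : P.mul (P.mul x (P.compl x)) (P.compl y) = P.zero := by
      rw [P.mul_compl, P.zero_mul]
    have h1 := (P.assoc_zero x (P.compl x) (P.compl y)).mp h0
    rw [hcomm (P.compl y) (P.compl x)] at h1
    rw [hcomm]; exact h1
  refine ⟨glb, ?_, ?_⟩
  · intro x y
    set s := P.mul (P.compl x) (P.compl y) with hs
    refine ⟨P.compl s, ?_, ?_, ?_⟩
    · -- x ≤ s'
      have h1 : P.mul (P.mul x s) (P.compl s) = P.mul x s := by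
        rw [hmz x y, P.zero_mul]
      exact P.superpos x s (P.compl s) h1 (P.mul_le_right _ _)
    · -- y ≤ s'
      have hys : P.mul y s = P.zero := by
        rw [hs, hcomm (P.compl x) (P.compl y)]; exact hmz y x
      have h1 : P.mul (P.mul y s) (P.compl s) = P.mul y s := by
        rw [hys, P.zero_mul]
      exact P.superpos y s (P.compl s) h1 (P.mul_le_right _ _)
    · -- least
      intro w hxw hyw
      have hw1 : P.le (P.compl w) (P.compl x) := hcontra x w hxw
      have hw2 : P.le (P.compl w) (P.compl y) := hcontra y w hyw
      have hws : P.le (P.compl w) s := (glb (P.compl x) (P.compl y)).2.2 _ hw1 hw2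
      have h0 : P.mul (P.compl w) (P.compl s) = P.zero := by
        have h := P.assoc_left (P.compl w) s (P.compl s) hws
        rw [hws, P.mul_compl, hz] at h
        exact h
      have h1 : P.mul (P.mul (P.compl s) (P.compl w)) w
          = P.mul (P.compl s) (P.compl w) := by
        rw [hcomm (P.compl s) (P.compl w), h0, P.zero_mul]
      exact P.superpos (P.compl s) w w (P.mul_le_right _ _) h1
  · intro x y z
    have ha1 : P.le (P.mul (P.mul x y) z) x := leT (glb (P.mul x y) z).1 (glb x y).1
    have ha2 : P.le (P.mul (P.mul x y) z) y := leT (glb (P.mul x y) z).1 (glb x y).2.1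
    have ha3 : P.le (P.mul (P.mul x y) z) z := (glb (P.mul x y) z).2.1
    have ha : P.le (P.mul (P.mul x y) z) (P.mul x (P.mul y z)) :=
      (glb x (P.mul y z)).2.2 _ ha1 ((glb y z).2.2 _ ha2 ha3)
    have hb1 : P.le (P.mul x (P.mul y z)) x := (glb x (P.mul y z)).1
    have hb2 : P.le (P.mul x (P.mul y z)) y := leT (glb x (P.mul y z)).2.1 (glb y z).1
    have hb3 : P.le (P.mul x (P.mul y z)) z := leT (glb x (P.mul y z)).2.1 (glb y z).2.1
    have hb : P.le (P.mul x (P.mul y z)) (P.mul (P.mul x y) z) :=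
      (glb (P.mul x y) z).2.2 _ ((glb x y).2.2 _ hb1 hb2) hb3
    exact P.le_antisymm _ _ ha hb
end

section
/- In a P-algebra, x + x' = 1 and x' + x = 1, where x + y := (y'·x')' and 1 := 0'. -/
theorem stmt12 {X : Type*} (P : PAlgebra X) (x : X) :
    P.plus x (P.compl x) = P.one ∧ P.plus (P.compl x) x = P.one := by
  have h1 : P.mul (P.compl x) (P.compl (P.compl x)) = P.zero := P.mul_compl _
  have h2 : P.mul (P.compl (P.compl x)) (P.compl x) = P.zero := by
    have := (P.assoc_zero (P.compl (P.compl x)) (P.compl (P.compl x)) (P.compl x)).mpr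
    rw [P.le_refl] at this
    apply this
    rw [h1, P.zero_mul]
  constructor <;> simp [PAlgebra.plus, PAlgebra.one, h1, h2]
end

section
/- In a P-algebra, complements are unique: if x·y = 0 and x + y = 1, then y = x'. -/
theorem stmt13 {X : Type*} (P : PAlgebra X) (x y : X)
    (h1 : P.mul x y = P.zero) (h2 : P.plus x y = P.one) : y = P.compl x := by
  have sym : ∀ a b, P.mul a b = P.zero → P.mul b a = P.zero := by
    intro a b h
    have h3 := (P.assoc_zero a b b).mp (by rw [h, P.zero_mul])
    rwa [P.le_refl] at h3
  have le_one : ∀ a, P.mul a P.one = a := by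
    intro a
    exact P.superpos a P.zero P.one
      (P.le_trans _ _ _ (P.mul_le_right a P.zero) (P.zero_mul P.one))
      (P.mul_le_right a (P.compl P.zero))
  have c0 : P.mul (P.compl y) (P.compl x) = P.zero := by
    have h3 : P.mul (P.mul (P.compl y) (P.compl x)) (P.plus x y) = P.zero :=
      P.mul_compl _
    rw [h2, le_one] at h3
    exact h3
  have xy0 : P.mul (P.compl x) (P.compl y) = P.zero := sym _ _ c0
  have hyx : P.mul y (P.compl x) = y :=
    P.superpos y x (P.compl x) (by rw [sym x y h1, P.zero_mul])
      (P.mul_le_right y (P.compl x))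
  have hxy : P.mul (P.compl x) y = P.compl x :=
    P.superpos (P.compl x) y y (P.mul_le_right _ _) (by rw [xy0, P.zero_mul])
  exact P.le_antisymm y (P.compl x) hyx hxy
end

section
/- In a P-algebra, x ≤ x·y + x·y' for all x, y, where x + y := (y'·x')'. -/
namespace PAlgebra

variable {X : Type*}

lemma aux_zcomm (P : PAlgebra X) {u v : X} (h : P.mul u v = P.zero) :
    P.mul v u = P.zero := by
  have h1 : P.mul (P.mul v u) u = P.mul v u := P.mul_le_right v u
  have h2 : P.mul (P.mul u u) v = P.zero := by rw [P.le_refl u, h]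
  have h3 : P.mul (P.mul v u) u = P.zero := (P.assoc_zero v u u).mpr h2
  rw [h1] at h3; exact h3

lemma aux_mul_zero (P : PAlgebra X) (u : X) : P.mul u P.zero = P.zero :=
  P.aux_zcomm (P.zero_mul u)

lemma aux_le_compl (P : PAlgebra X) {u v : X} (h : P.mul u v = P.zero) :
    P.mul u (P.compl v) = u := by
  apply P.superpos u v (P.compl v)
  · rw [h, P.zero_mul]
  · exact P.mul_le_right u (P.compl v)

end PAlgebra

theorem stmt15 {X : Type*} (P : PAlgebra X) (x y : X) :
    P.le x (P.plus (P.mul x y) (P.mul x (P.compl y))) := by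
  set a := P.mul x y with ha
  set b := P.mul x (P.compl y) with hb
  set w := P.mul (P.compl b) (P.compl a) with hw
  -- w ≤ a', so w·a = 0, so a·w = 0
  have hwa' : P.mul w (P.compl a) = w := P.mul_le_right _ _
  have hwa : P.mul w a = P.zero := by
    have h2 : P.mul (P.mul a (P.compl a)) w = P.zero := by
      rw [P.mul_compl, P.zero_mul]
    have h3 : P.mul (P.mul w (P.compl a)) a = P.zero :=
      (P.assoc_zero w (P.compl a) a).mpr h2
    rw [hwa'] at h3; exact h3
  have haw : P.mul a w = P.zero := P.aux_zcomm hwa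
  -- a·y' = 0 (since a ≤ y and y·y' = 0)
  have hay : P.mul a y = a := P.mul_le_right x y
  have hay' : P.mul a (P.compl y) = P.zero := by
    have h1 : P.mul (P.mul a y) (P.compl y) = P.mul a (P.mul y (P.compl y)) :=
      P.assoc_left a y (P.compl y) hay
    rw [hay, P.mul_compl, P.aux_mul_zero] at h1
    exact h1
  -- b·a = 0 (since b ≤ y' and a·y' = 0)
  have hby' : P.mul b (P.compl y) = b := P.mul_le_right x (P.compl y)
  have hba : P.mul b a = P.zero := by
    have h1 : P.mul (P.mul a (P.compl y)) b = P.zero := by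
      rw [hay', P.zero_mul]
    have h2 : P.mul (P.mul b (P.compl y)) a = P.zero :=
      (P.assoc_zero a (P.compl y) b).mp h1
    rw [hby'] at h2; exact h2
  -- b ≤ a'
  have hba' : P.mul b (P.compl a) = b := P.aux_le_compl hba
  -- w·b = 0, so b·w = 0
  have hwb : P.mul w b = P.zero := by
    apply (P.assoc_zero (P.compl b) (P.compl a) b).mpr
    rw [hba', P.mul_compl]
  have hbw : P.mul b w = P.zero := P.aux_zcomm hwb
  -- conclude via superpos
  have hfin : P.mul x (P.compl w) = x := by
    apply P.superpos x y (P.compl w)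
    · exact P.aux_le_compl haw
    · exact P.aux_le_compl hbw
  exact hfin
end

section
/- In a P-algebra, the orthomodular law holds: if x ≤ y, then y = x + x'·y = x + y·x' = y·x' + x = x'·y + x, where u + v := (v'·u')'. -/
section Aux
variable {X : Type*} (P : PAlgebra X)

lemma PA_mzc {a b : X} (h : P.mul a b = P.zero) : P.mul b a = P.zero := by
  have h1 : P.mul (P.mul a b) a = P.mul a b := by rw [h, P.zero_mul]
  have h2 := P.smile_symm a b h1
  have h3 := (P.assoc_zero a b (P.mul b a)).mp (by rw [h, P.zero_mul])
  rw [h2] at h3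
  rw [← P.mul_le_right b a]
  exact h3

lemma PA_compl_mul (x : X) : P.mul (P.compl x) x = P.zero :=
  PA_mzc P (P.mul_compl x)

lemma PA_le_mc_zero {x y : X} (h : P.mul x y = x) :
    P.mul x (P.compl y) = P.zero := by
  have h1 := (P.assoc_zero (P.compl y) y x).mp
    (by rw [PA_compl_mul P y, P.zero_mul])
  rw [h] at h1
  exact h1

lemma PA_le_self_cc (x : X) : P.mul x (P.compl (P.compl x)) = x :=
  P.superpos x (P.compl x) (P.compl (P.compl x))
    (by rw [P.mul_compl, P.zero_mul])
    (P.mul_le_right x (P.compl (P.compl x)))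

lemma PA_antitone {x y : X} (h : P.mul x y = x) :
    P.mul (P.compl y) (P.compl x) = P.compl y := by
  have hyx : P.mul (P.compl y) x = P.zero := PA_mzc P (PA_le_mc_zero P h)
  exact P.superpos (P.compl y) x (P.compl x)
    (by rw [hyx, P.zero_mul]) (P.mul_le_right _ _)

lemma PA_compl_compl (x : X) : P.compl (P.compl x) = x := by
  have h1 : P.compl (P.compl (P.compl x)) = P.compl x :=
    P.le_antisymm _ _ (PA_antitone P (PA_le_self_cc P x)) (PA_le_self_cc P (P.compl x))
  have hz : P.mul (P.compl (P.compl x)) (P.compl x) = P.zero := by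
    have := P.mul_compl (P.compl (P.compl x))
    rwa [h1] at this
  have h2 : P.mul (P.compl (P.compl x)) x = P.compl (P.compl x) :=
    P.superpos _ x x (P.mul_le_right _ _) (by rw [hz, P.zero_mul])
  exact P.le_antisymm _ _ h2 (PA_le_self_cc P x)

lemma PA_le_of_mc_zero {a b : X} (h : P.mul a (P.compl b) = P.zero) :
    P.mul a b = a := by
  refine P.superpos a (P.compl b) b (by rw [h, P.zero_mul]) ?_
  rw [PA_compl_compl]
  exact P.mul_le_right a b

lemma PA_smile_of_le {x y : X} (h : P.mul x y = x) :
    P.mul (P.mul y (P.compl x)) y = P.mul y (P.compl x) := by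
  have h1 := PA_antitone P h
  have h2 : P.mul (P.mul (P.compl y) (P.compl x)) y = P.zero := by
    rw [h1]; exact PA_compl_mul P y
  have h3 : P.mul (P.mul y (P.compl x)) (P.compl y) = P.zero :=
    (P.assoc_zero y (P.compl x) (P.compl y)).mpr h2
  exact PA_le_of_mc_zero P h3

lemma PA_smile2 {x y : X} (h : P.mul x y = x) :
    P.mul (P.mul (P.compl x) y) (P.compl x) = P.mul (P.compl x) y :=
  P.smile_symm y (P.compl x) (PA_smile_of_le P h)

lemma PA_comm {x y : X} (h : P.mul x y = x) :
    P.mul (P.compl x) y = P.mul y (P.compl x) := by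
  apply P.le_antisymm
  · have hb := P.mul_le_right (P.compl x) y
    have := P.assoc_left (P.mul (P.compl x) y) y (P.compl x) hb
    rw [hb] at this
    rw [← this]
    exact PA_smile2 P h
  · have hb := P.mul_le_right y (P.compl x)
    have := P.assoc_left (P.mul y (P.compl x)) (P.compl x) y hb
    rw [hb] at this
    rw [← this]
    exact PA_smile_of_le P h

lemma PA_om {x y : X} (h : P.mul x y = x) :
    y = P.compl (P.mul (P.compl (P.mul (P.compl x) y)) (P.compl x)) := by
  set z := P.mul (P.compl x) y with hz
  -- t ≤ y
  have hzy : P.mul z y = z := P.mul_le_right (P.compl x) y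
  have hyz := PA_antitone P hzy  -- y' · z' = y'
  have h5 : P.mul (P.compl y) (P.mul (P.compl z) (P.compl x)) = P.compl y := by
    have ha := P.assoc_left (P.compl y) (P.compl z) (P.compl x) hyz
    rw [hyz] at ha
    rw [← ha]
    exact PA_antitone P h
  have t_le_y : P.mul (P.compl (P.mul (P.compl z) (P.compl x))) y
      = P.compl (P.mul (P.compl z) (P.compl x)) := by
    have := PA_antitone P h5
    rwa [PA_compl_compl] at this
  -- y ≤ t
  have h6 : P.mul (P.mul (P.compl z) (P.compl x)) y = P.zero := by
    refine (P.assoc_zero (P.compl z) (P.compl x) y).mpr ?_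
    rw [← PA_comm P h, ← hz]
    exact P.mul_compl z
  have h7 : P.mul (P.mul (P.compl z) (P.compl x)) (P.compl y)
      = P.mul (P.compl z) (P.compl x) :=
    P.superpos _ y (P.compl y) (by rw [h6, P.zero_mul]) (P.mul_le_right _ _)
  have y_le_t : P.mul y (P.compl (P.mul (P.compl z) (P.compl x))) = y := by
    have := PA_antitone P h7
    rwa [PA_compl_compl] at this
  exact P.le_antisymm y _ y_le_t t_le_y

end Aux

theorem stmt17 {X : Type*} (P : PAlgebra X) (x y : X) (h : P.le x y) :
    y = P.plus x (P.mul (P.compl x) y) ∧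
    y = P.plus x (P.mul y (P.compl x)) ∧
    y = P.plus (P.mul y (P.compl x)) x ∧
    y = P.plus (P.mul (P.compl x) y) x := by
  have h' : P.mul x y = x := h
  have hcomm := PA_comm P h'  -- x'·y = y·x'
  have hom := PA_om P h'
  have hxu : P.mul x (P.compl (P.mul y (P.compl x))) = x := by
    have := PA_antitone P (P.mul_le_right y (P.compl x))
    rwa [PA_compl_compl] at this
  have hcomm2 := PA_comm P hxu
    -- x' · (y·x')' = (y·x')' · x'
  refine ⟨hom, ?_, ?_, ?_⟩
  · show y = P.compl (P.mul (P.compl (P.mul y (P.compl x))) (P.compl x))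
    rw [← hcomm]; exact hom
  · show y = P.compl (P.mul (P.compl x) (P.compl (P.mul y (P.compl x))))
    rw [hcomm2, ← hcomm]; exact hom
  · show y = P.compl (P.mul (P.compl x) (P.compl (P.mul (P.compl x) y)))
    rw [hcomm, hcomm2, ← hcomm]; exact hom
end

section
/- In a P-algebra, if every countable set of pairwise orthogonal elements has a least upper bound, then every ascending sequence x₀ ≤ x₁ ≤ x₂ ≤ … has a least upper bound, and conversely. -/
namespace PAlgebra

variable {X : Type*} (P : PAlgebra X)



lemma le_rfl' (x : X) : P.le x x := P.le_refl x

lemma zero_le' (x : X) : P.le P.zero x := P.zero_mul x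

lemma le_trans' {x y z : X} (h1 : P.le x y) (h2 : P.le y z) : P.le x z :=
  P.le_trans x y z h1 h2

/-- If x ≤ y then y·x = x. -/
lemma mul_absorb {x y : X} (h : P.le x y) : P.mul y x = x := by
  have h1 := P.assoc_right x y x h
  rw [h, P.le_refl] at h1
  exact (P.le_antisymm x (P.mul y x) h1.symm (P.mul_le_right y x)).symm

lemma le_zero_eq {x : X} (h : P.le x P.zero) : x = P.zero := by
  have := P.mul_absorb h
  rw [P.zero_mul] at this
  exact this.symm

lemma orth_symm {x y : X} (h : P.mul x y = P.zero) : P.mul y x = P.zero := by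
  have h1 : P.mul (P.mul x y) y = P.zero := by rw [P.mul_le_right, h]
  have h2 := (P.assoc_zero x y y).mp h1
  rwa [P.le_refl] at h2

lemma mul_mono' {x y : X} (z : X) (h : P.le x y) : P.le (P.mul x z) (P.mul y z) :=
  P.mul_mono x y z h

/-- a ≤ b and b·c = 0 imply a·c = 0. -/
lemma orth_of_le {a b c : X} (hab : P.le a b) (hbc : P.mul b c = P.zero) :
    P.mul a c = P.zero := by
  have := P.mul_mono' c hab
  rw [hbc] at this
  exact P.le_zero_eq this

lemma le_compl_of_orth {a c : X} (h : P.mul a c = P.zero) : P.le a (P.compl c) := by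
  refine P.superpos a c (P.compl c) ?_ (P.mul_le_right a (P.compl c))
  rw [h, P.zero_mul]

lemma orth_of_le_compl {a c : X} (h : P.le a (P.compl c)) : P.mul a c = P.zero :=
  P.orth_of_le h (P.orth_symm (P.mul_compl c))

lemma compl_compl' (b : X) : P.compl (P.compl b) = b := by
  have h1 : P.le b (P.compl (P.compl b)) := P.le_compl_of_orth (P.mul_compl b)
  have h2 : P.le (P.compl (P.compl b)) b := by
    refine P.superpos (P.compl (P.compl b)) b b (P.mul_le_right _ _) ?_
    rw [P.orth_symm (P.mul_compl (P.compl b)), P.zero_mul]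
  exact (P.le_antisymm b _ h1 h2).symm

lemma le_plus_left {a b : X} (_hab : P.mul a b = P.zero) : P.le a (P.plus a b) := by
  have hq : P.mul (P.mul (P.compl b) (P.compl a)) a = P.zero :=
    P.orth_of_le (P.mul_le_right _ _) (P.orth_symm (P.mul_compl a))
  exact P.le_compl_of_orth (P.orth_symm hq)

lemma le_plus_right {a b : X} (hab : P.mul a b = P.zero) : P.le b (P.plus a b) := by
  have hba : P.le b (P.compl a) := P.le_compl_of_orth (P.orth_symm hab)
  have h1 : P.mul (P.mul b (P.compl a)) (P.compl b) = P.zero := by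
    rw [hba]; exact P.mul_compl b
  have h2 := (P.assoc_zero (P.compl b) (P.compl a) b).mpr h1
  exact P.le_compl_of_orth (P.orth_symm h2)

lemma plus_le {a b w : X} (ha : P.le a w) (hb : P.le b w) : P.le (P.plus a b) w := by
  set q := P.mul (P.compl b) (P.compl a) with hq
  set p := P.compl q with hp
  have h1 : P.mul (P.mul p (P.compl a)) (P.compl b) = P.zero :=
    (P.assoc_zero p (P.compl a) (P.compl b)).mpr (P.mul_compl q)
  have h2 : P.le (P.mul p (P.compl a)) b := by
    have h2' := P.le_compl_of_orth h1
    rwa [P.compl_compl' b] at h2'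
  refine P.superpos p a w ?_ ?_
  · exact P.le_trans' (P.mul_le_right p a) ha
  · exact P.le_trans' h2 hb

end PAlgebra
namespace PAlgebra

variable {X : Type*} (P : PAlgebra X)

/-- If a ≤ b then b·a' ≤ b. -/
lemma mul_compl_le {a b : X} (h : P.le a b) : P.le (P.mul b (P.compl a)) b := by
  have hE : P.mul (P.mul (P.compl a) b) a = P.zero := by
    rw [P.assoc_right a b (P.compl a) h, P.mul_absorb h, P.orth_symm (P.mul_compl a)]
  have hE2 : P.le (P.mul (P.compl a) b) (P.compl a) := by
    refine P.superpos (P.mul (P.compl a) b) a (P.compl a) ?_ ?_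
    · rw [hE, P.zero_mul]
    · exact P.mul_le_right _ _
  exact P.smile_symm (P.compl a) b hE2

lemma finset_lub (A : Finset X)
    (horth : ∀ a ∈ A, ∀ b ∈ A, a ≠ b → P.mul a b = P.zero) :
    ∃ s, (∀ a ∈ A, P.le a s) ∧ ∀ w, (∀ a ∈ A, P.le a w) → P.le s w := by
  classical
  induction A using Finset.induction_on with
  | empty => exact ⟨P.zero, by simp, fun w _ => P.zero_le' w⟩
  | @insert a A ha ih =>
    obtain ⟨s, hub, hleast⟩ := ih (fun x hx y hy hxy =>
      horth x (Finset.mem_insert_of_mem hx) y (Finset.mem_insert_of_mem hy) hxy)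
    have hsa : P.mul s a = P.zero := by
      apply P.orth_of_le_compl
      apply hleast
      intro b hb
      exact P.le_compl_of_orth (horth b (Finset.mem_insert_of_mem hb) a
        (Finset.mem_insert_self a A) (fun h => ha (h ▸ hb)))
    refine ⟨P.plus s a, ?_, ?_⟩
    · intro x hx
      rcases Finset.mem_insert.mp hx with h | h
      · subst h; exact P.le_plus_right hsa
      · exact P.le_trans' (hub x h) (P.le_plus_left hsa)
    · intro w hw
      exact P.plus_le (hleast w fun x hx => hw x (Finset.mem_insert_of_mem hx))
        (hw a (Finset.mem_insert_self a A))

end PAlgebra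

theorem stmt18 {X : Type*} (P : PAlgebra X) :
    (∀ Y : Set X, Y.Countable →
        (∀ a ∈ Y, ∀ b ∈ Y, a ≠ b → P.mul a b = P.zero) →
        ∃ s, (∀ y ∈ Y, P.le y s) ∧ ∀ w, (∀ y ∈ Y, P.le y w) → P.le s w) ↔
    (∀ f : ℕ → X, (∀ n, P.le (f n) (f (n + 1))) →
        ∃ s, (∀ n, P.le (f n) s) ∧ ∀ w, (∀ n, P.le (f n) w) → P.le s w) := by
  constructor
  · intro h f hf
    have hmono : ∀ m n, m ≤ n → P.le (f m) (f n) := by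
      intro m n hmn
      induction n, hmn using Nat.le_induction with
      | base => exact P.le_rfl' _
      | succ n hmn ih => exact P.le_trans' ih (hf n)
    set D : ℕ → X := fun n => P.mul (f (n+1)) (P.compl (f n)) with hD
    have hDle : ∀ n, P.le (D n) (f (n+1)) := fun n => P.mul_compl_le (hf n)
    have hfD : ∀ n, P.mul (f n) (D n) = P.zero := fun n =>
      P.orth_symm (P.orth_of_le_compl (P.mul_le_right _ _))
    have hfDle : ∀ m n, m ≤ n → P.mul (f m) (D n) = P.zero := fun m n hmn =>
      P.orth_of_le (hmono m n hmn) (hfD n)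
    have hDD : ∀ m n, m < n → P.mul (D m) (D n) = P.zero := fun m n hmn =>
      P.orth_of_le (P.le_trans' (hDle m) (hmono (m+1) n hmn)) (hfD n)
    have horthY : ∀ a ∈ insert (f 0) (Set.range D), ∀ b ∈ insert (f 0) (Set.range D),
        a ≠ b → P.mul a b = P.zero := by
      rintro a (rfl | ⟨m, rfl⟩) b (rfl | ⟨n, rfl⟩) hab
      · exact absurd rfl hab
      · exact hfDle 0 n (Nat.zero_le n)
      · exact P.orth_symm (hfDle 0 m (Nat.zero_le m))
      · rcases lt_or_gt_of_ne (fun h' : m = n => hab (by rw [h'])) with h' | h'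
        · exact hDD m n h'
        · exact P.orth_symm (hDD n m h')
    obtain ⟨s, hub, hleast⟩ := h (insert (f 0) (Set.range D))
      ((Set.countable_range D).insert _) horthY
    have hfs : ∀ n, P.le (f n) s := by
      intro n
      induction n with
      | zero => exact hub (f 0) (Set.mem_insert _ _)
      | succ n ih =>
        refine P.superpos (f (n+1)) (f n) s ?_ ?_
        · rw [P.mul_absorb (hf n)]; exact ih
        · exact hub (D n) (Set.mem_insert_of_mem _ ⟨n, rfl⟩)
    refine ⟨s, hfs, ?_⟩
    intro w hw
    apply hleast
    rintro y (rfl | ⟨n, rfl⟩)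
    · exact hw 0
    · exact P.le_trans' (hDle n) (hw (n+1))
  · intro h Y hcount horth
    classical
    rcases Y.eq_empty_or_nonempty with rfl | hne
    · exact ⟨P.zero, by simp, fun w _ => P.zero_le' w⟩
    · obtain ⟨g, rfl⟩ := Set.Countable.exists_eq_range hcount hne
      have hfin : ∀ n : ℕ, ∃ s, (∀ a ∈ (Finset.range (n+1)).image g, P.le a s) ∧
          ∀ w, (∀ a ∈ (Finset.range (n+1)).image g, P.le a w) → P.le s w := by
        intro n
        apply P.finset_lub
        intro a ha b hb hab
        simp only [Finset.mem_image, Finset.mem_range] at ha hb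
        obtain ⟨i, _, rfl⟩ := ha; obtain ⟨j, _, rfl⟩ := hb
        exact horth _ (Set.mem_range_self i) _ (Set.mem_range_self j) hab
      choose t hub hleast using hfin
      have hchain : ∀ n, P.le (t n) (t (n+1)) := by
        intro n
        apply hleast
        intro a ha
        simp only [Finset.mem_image, Finset.mem_range] at ha
        obtain ⟨i, hi, rfl⟩ := ha
        apply hub
        simp only [Finset.mem_image, Finset.mem_range]
        exact ⟨i, by omega, rfl⟩
      obtain ⟨s, hsub, hsleast⟩ := h t hchain
      refine ⟨s, ?_, ?_⟩
      · rintro y ⟨k, rfl⟩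
        refine P.le_trans' (hub k _ ?_) (hsub k)
        simp only [Finset.mem_image, Finset.mem_range]
        exact ⟨k, by omega, rfl⟩
      · intro w hw
        apply hsleast
        intro n
        apply hleast
        intro a ha
        simp only [Finset.mem_image, Finset.mem_range] at ha
        obtain ⟨i, _, rfl⟩ := ha
        exact hw _ (Set.mem_range_self i)
end

section
/- In an atomic P-algebra, if x ≤ y and x ≠ y, then there exists an atomic element a with a ≤ y and a·x = 0. -/
/-- `a` is an atomic feature. -/
def PAlgebra.Atomic {X : Type*} (P : PAlgebra X) (a : X) : Prop :=
  a ≠ P.zero ∧ ∀ x, P.mul x a = P.zero ∨ P.mul x a = a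

lemma PAlgebra.zero_comm {X : Type*} (P : PAlgebra X) (u v : X) :
    P.mul u v = P.zero ↔ P.mul v u = P.zero := by
  constructor
  · intro h
    have h1 : P.mul (P.mul u v) v = P.zero := by rw [P.mul_le_right, h]
    have h2 := (P.assoc_zero u v v).mp h1
    rwa [P.le_refl] at h2
  · intro h
    have h1 : P.mul (P.mul v u) u = P.zero := by rw [P.mul_le_right, h]
    have h2 := (P.assoc_zero v u u).mp h1
    rwa [P.le_refl] at h2

theorem stmt19 {X : Type*} (P : PAlgebra X)
    (hatomic : ∀ x, x ≠ P.zero → ∃ a, P.Atomic a ∧ P.le a x)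
    (x y : X) (hle : P.le x y) (hne : x ≠ y) :
    ∃ a, P.Atomic a ∧ P.le a y ∧ P.mul a x = P.zero := by
  set w := P.mul (P.compl x) y with hw
  -- w·x = 0
  have hwx : P.mul w x = P.zero := by
    rw [hw]
    apply (P.assoc_zero (P.compl x) y x).mpr
    rw [hle, P.mul_compl]
  have hxw : P.mul x w = P.zero := (P.zero_comm w x).mp hwx
  -- w ≠ 0
  have hwne : w ≠ P.zero := by
    intro h0
    have hyx' : P.mul y (P.compl x) = P.zero := (P.zero_comm (P.compl x) y).mp h0
    have h1 : P.mul (P.mul y x) x = P.mul y x := P.mul_le_right y x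
    have h2 : P.mul (P.mul y (P.compl x)) x = P.mul y (P.compl x) := by
      rw [hyx', P.zero_mul]
    have hyx : P.mul y x = y := P.superpos y x x h1 h2
    exact hne (P.le_antisymm x y hle hyx)
  obtain ⟨a, ha, haw⟩ := hatomic w hwne
  refine ⟨a, ha, ?_, ?_⟩
  · exact P.le_trans a w y haw (P.mul_le_right (P.compl x) y)
  · have : P.mul (P.mul a w) x = P.zero := by
      apply (P.assoc_zero a w x).mpr
      rw [hxw, P.zero_mul]
    rwa [haw] at this
end
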